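/- arXiv:1805.06271 — 7 statements merged into one kernel-verified Lean document; each statement's English description precedes it below -/
import Mathlib

section
/- For all positive real numbers a and b and any function λ: ℝ≥0 → ℝ≥0 that is continuous, strictly increasing, unbounded, and satisfies λ(0)=0 (i.e., a K∞ function), one has a + b ≤ max((id + λ)(a), (id + λ⁻¹)(b)), where λ⁻¹ denotes the inverse function of λ. -/
/-- A class K∞ function: continuous, strictly increasing, vanishing at 0, and unbounded. -/
def IsKInf (f : NNReal → NNReal) : Prop :=
  Continuous f ∧ StrictMono f ∧ f 0 = 0 ∧ Filter.Tendsto f Filter.atTop Filter.atTop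

/-- Either `b ≤ f a`, or `f a < b = f (g b)` and monotonicity forces `a < g b`. -/
theorem add_le_max_add_of_monotone_of_rightInverse {α : Type*} [LinearOrder α]
    [AddCommMonoid α] [IsOrderedAddMonoid α] {f g : α → α} (hf : Monotone f)
    (hfg : Function.RightInverse g f) (a b : α) :
    a + b ≤ max (a + f a) (b + g b) := by
  rcases le_or_gt b (f a) with hb | hb
  · exact le_max_of_le_left (add_le_add_right hb a)
  · have ha : a < g b := hf.reflect_lt (by rwa [hfg b])
    exact le_max_of_le_right ((add_le_add_left ha.le b).trans_eq (add_comm _ _))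

theorem stmt0_general (a b : NNReal)
    (lam lamInv : NNReal → NNReal) (hlam : IsKInf lam)
    (hinv2 : ∀ s, lam (lamInv s) = s) :
    a + b ≤ max (a + lam a) (b + lamInv b) :=
  add_le_max_add_of_monotone_of_rightInverse hlam.2.1.monotone hinv2 a b

theorem stmt0 (a b : NNReal) (ha : 0 < a) (hb : 0 < b)
    (lam lamInv : NNReal → NNReal) (hlam : IsKInf lam)
    (hinv1 : ∀ s, lamInv (lam s) = s) (hinv2 : ∀ s, lam (lamInv s) = s) :
    a + b ≤ max (a + lam a) (b + lamInv b) :=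
  stmt0_general a b lam lamInv hlam hinv2
end

section
/- Let α: ℝ≥0 → ℝ≥0 be of class K (continuous, strictly increasing, α(0)=0) and χ: ℝ≥0 → ℝ≥0 be of class K∞ such that χ − id is also of class K∞. Then for all a, b ≥ 0, α(a+b) ≤ α(χ(a)) + α(χ((χ − id)⁻¹(b))). -/
/-- A class K function: continuous, strictly increasing, vanishing at 0. -/
def IsK (f : NNReal → NNReal) : Prop :=
  Continuous f ∧ StrictMono f ∧ f 0 = 0

theorem add_tsub_le_max_of_monotone_tsub {M : Type*} [AddCommMonoid M] [LinearOrder M]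
    [CanonicallyOrderedAdd M] [Sub M] [OrderedSub M] {χ : M → M}
    (hle : ∀ s, s ≤ χ s) (hd : Monotone fun s => χ s - s) (a y : M) :
    a + (χ y - y) ≤ max (χ a) (χ y) := by
  rcases le_total a y with hay | hya
  · calc a + (χ y - y) ≤ y + (χ y - y) := add_le_add_left hay _
      _ = χ y := add_tsub_cancel_of_le (hle y)
      _ ≤ max (χ a) (χ y) := le_max_right _ _
  · calc a + (χ y - y) ≤ a + (χ a - a) := add_le_add_right (hd hya) _
      _ = χ a := add_tsub_cancel_of_le (hle a)
      _ ≤ max (χ a) (χ y) := le_max_left _ _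

theorem stmt1_general (α χ : NNReal → NNReal) (hα : IsK α)
    -- χ − id is of class K∞ (in particular id ≤ χ):
    (hle : ∀ s, s ≤ χ s) (hd : IsKInf (fun s => χ s - s))
    -- inverse of χ − id:
    (dInv : NNReal → NNReal)
    (hdInv2 : ∀ s, χ (dInv s) - dInv s = s) :
    ∀ a b : NNReal, α (a + b) ≤ α (χ a) + α (χ (dInv b)) := by
  intro a b
  have key := add_tsub_le_max_of_monotone_tsub hle hd.2.1.monotone a (dInv b)
  rw [hdInv2] at key
  calc α (a + b) ≤ α (max (χ a) (χ (dInv b))) := hα.2.1.monotone key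
    _ = max (α (χ a)) (α (χ (dInv b))) := hα.2.1.monotone.map_max
    _ ≤ α (χ a) + α (χ (dInv b)) := max_le (le_add_right le_rfl) (le_add_left le_rfl)

theorem stmt1 (α χ : NNReal → NNReal) (hα : IsK α) (hχ : IsKInf χ)
    -- χ − id is of class K∞ (in particular id ≤ χ):
    (hle : ∀ s, s ≤ χ s) (hd : IsKInf (fun s => χ s - s))
    -- inverse of χ − id:
    (dInv : NNReal → NNReal)
    (hdInv1 : ∀ s, dInv (χ s - s) = s) (hdInv2 : ∀ s, χ (dInv s) - dInv s = s) :
    ∀ a b : NNReal, α (a + b) ≤ α (χ a) + α (χ (dInv b)) :=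
  stmt1_general α χ hα hle hd dInv hdInv2
end

section
/- Consider two transition systems Σ = (X, U, f, Y, h) and Σ̂ = (X̂, Û, f̂, Ŷ, ĥ) with Ŷ ⊆ Y, where f: X × U → Set X and f̂: X̂ × Û → Set X̂ are set-valued transition maps. Suppose Ṽ: X × X̂ → ℝ≥0 is an alternating simulation function from Σ̂ to Σ with functions α̃, σ̃ of class K∞ (σ̃ < id), ρ̃_ext of class K∞ ∪ {0}, and constant ε̃ ≥ 0, and suppose there exists v > 0 with ‖û‖ ≤ v for all û ∈ Û. Then the relation R = {(x, x̂) : Ṽ(x, x̂) ≤ max(ρ̃_ext(v), ε̃)} satisfies: (i) for all (x, x̂) ∈ R, ‖h(x) − ĥ(x̂)‖ ≤ α̃⁻¹(max(ρ̃_ext(v), ε̃)); (ii) for all (x, x̂) ∈ R and all û ∈ Û, there exists u ∈ U such that for all x_d ∈ f(x, u) there exists x̂_d ∈ f̂(x̂, û) with (x_d, x̂_d) ∈ R. -/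
open Filter

lemma IsKInf.strictMono {f : NNReal → NNReal} (hf : IsKInf f) : StrictMono f :=
  hf.2.1

lemma IsKInf.monotone {f : NNReal → NNReal} (hf : IsKInf f) : Monotone f :=
  hf.strictMono.monotone

lemma IsKInf.map_zero {f : NNReal → NNReal} (hf : IsKInf f) : f 0 = 0 :=
  hf.2.2.1

lemma monotone_of_isKInf_or_eq_zero {f : NNReal → NNReal} (hf : IsKInf f ∨ f = 0) :
    Monotone f := by
  rcases hf with hf | rfl
  · exact hf.monotone
  · exact monotone_const

lemma StrictMono.le_of_apply_le_of_rightInverse {α β : Type*} [LinearOrder α] [Preorder β]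
    {f : α → β} {g : β → α} (hf : StrictMono f) (hg : Function.RightInverse g f) {a : α} {b : β}
    (h : f a ≤ b) : a ≤ g b :=
  hf.le_iff_le.1 (by rwa [hg b])

lemma apply_le_self_of_lt_self {σ : NNReal → NNReal} (h0 : σ 0 = 0)
    (hlt : ∀ s, 0 < s → σ s < s) (s : NNReal) : σ s ≤ s := by
  rcases eq_zero_or_pos s with rfl | hs
  · exact h0.le
  · exact (hlt s hs).le

theorem stmt4_general
    {X U Xh Uh Y : Type*} [NormedAddCommGroup Y] [NormedAddCommGroup Uh]
    (f : X → U → Set X) (fh : Xh → Uh → Set Xh)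
    (h : X → Y) (hh : Xh → Y)
    (V : X → Xh → NNReal)
    (αt σt ρext : NNReal → NNReal) (αtInv : NNReal → NNReal) (εt : NNReal)
    (hαt : IsKInf αt)
    (hαtInv2 : ∀ s, αt (αtInv s) = s)
    (hσt : IsKInf σt) (hσtlt : ∀ s : NNReal, 0 < s → σt s < s)
    (hρ : IsKInf ρext ∨ ρext = 0)
    -- Ṽ is an alternating simulation function from Σ̂ to Σ:
    (hV1 : ∀ (x : X) (xh : Xh), αt ‖h x - hh xh‖₊ ≤ V x xh)
    (hV2 : ∀ (x : X) (xh : Xh) (uh : Uh), ∃ u : U,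
      ∀ xd ∈ f x u, ∃ xhd ∈ fh xh uh,
        V xd xhd ≤ max (σt (V x xh)) (max (ρext ‖uh‖₊) εt))
    -- inputs of Σ̂ are bounded by v:
    (v : NNReal) (hbound : ∀ uh : Uh, ‖uh‖₊ ≤ v) :
    -- (i) the relation R = {(x,x̂) : Ṽ(x,x̂) ≤ max(ρ̃ext(v),ε̃)} has small output mismatch:
    (∀ (x : X) (xh : Xh), V x xh ≤ max (ρext v) εt →
        ‖h x - hh xh‖₊ ≤ αtInv (max (ρext v) εt)) ∧
    -- (ii) R is closed under the alternating transition condition: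
    (∀ (x : X) (xh : Xh), V x xh ≤ max (ρext v) εt →
      ∀ uh : Uh, ∃ u : U, ∀ xd ∈ f x u, ∃ xhd ∈ fh xh uh,
        V xd xhd ≤ max (ρext v) εt) := by
  refine ⟨fun x xh hR => hαt.strictMono.le_of_apply_le_of_rightInverse hαtInv2 ((hV1 x xh).trans hR),
    fun x xh hR uh => ?_⟩
  obtain ⟨u, hu⟩ := hV2 x xh uh
  refine ⟨u, fun xd hxd => ?_⟩
  obtain ⟨xhd, hxhd, hle⟩ := hu xd hxd
  have hσ : σt (V x xh) ≤ max (ρext v) εt :=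
    (apply_le_self_of_lt_self hσt.map_zero hσtlt _).trans hR
  have hρ' : ρext ‖uh‖₊ ≤ ρext v := monotone_of_isKInf_or_eq_zero hρ (hbound uh)
  exact ⟨xhd, hxhd, hle.trans (max_le hσ (max_le_max_right εt hρ'))⟩

theorem stmt4
    {X U Xh Uh Y : Type*} [NormedAddCommGroup Y] [NormedAddCommGroup Uh]
    (f : X → U → Set X) (fh : Xh → Uh → Set Xh)
    (h : X → Y) (hh : Xh → Y)
    (V : X → Xh → NNReal)
    (αt σt ρext : NNReal → NNReal) (αtInv : NNReal → NNReal) (εt : NNReal)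
    (hαt : IsKInf αt)
    (hαtInv1 : ∀ s, αtInv (αt s) = s) (hαtInv2 : ∀ s, αt (αtInv s) = s)
    (hσt : IsKInf σt) (hσtlt : ∀ s : NNReal, 0 < s → σt s < s)
    (hρ : IsKInf ρext ∨ ρext = 0)
    -- Ṽ is an alternating simulation function from Σ̂ to Σ:
    (hV1 : ∀ (x : X) (xh : Xh), αt ‖h x - hh xh‖₊ ≤ V x xh)
    (hV2 : ∀ (x : X) (xh : Xh) (uh : Uh), ∃ u : U,
      ∀ xd ∈ f x u, ∃ xhd ∈ fh xh uh,
        V xd xhd ≤ max (σt (V x xh)) (max (ρext ‖uh‖₊) εt))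
    -- inputs of Σ̂ are bounded by v:
    (v : NNReal) (hv : 0 < v) (hbound : ∀ uh : Uh, ‖uh‖₊ ≤ v) :
    -- (i) the relation R = {(x,x̂) : Ṽ(x,x̂) ≤ max(ρ̃ext(v),ε̃)} has small output mismatch:
    (∀ (x : X) (xh : Xh), V x xh ≤ max (ρext v) εt →
        ‖h x - hh xh‖₊ ≤ αtInv (max (ρext v) εt)) ∧
    -- (ii) R is closed under the alternating transition condition:
    (∀ (x : X) (xh : Xh), V x xh ≤ max (ρext v) εt →
      ∀ uh : Uh, ∃ u : U, ∀ xd ∈ f x u, ∃ xhd ∈ fh xh uh,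
        V xd xhd ≤ max (ρext v) εt) :=
  stmt4_general f fh h hh V αt σt ρext αtInv εt hαt hαtInv2 hσt hσtlt hρ hV1 hV2 v hbound
end

section
/- Let N ≥ 2 and let γ_ij: ℝ≥0 → ℝ≥0, for i, j ∈ {1,...,N}, be class K∞ functions. Suppose there exist class K∞ functions δ_1,...,δ_N such that max over j of δ_i⁻¹ ∘ γ_ij ∘ δ_j (s) < s for all s > 0 and all i. Then for every r ∈ {2,...,N} and every cycle (i_1,...,i_r) ∈ {1,...,N}^r that is not constant, γ_{i_1 i_2} ∘ γ_{i_2 i_3} ∘ ⋯ ∘ γ_{i_{r-1} i_r} ∘ γ_{i_r i_1}(s) < s for all s > 0, i.e., the small-gain cycle condition holds for all cycles. -/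
theorem stmt5 (N : ℕ) (hN : 2 ≤ N)
    (γ : Fin N → Fin N → (NNReal → NNReal))
    (hγ : ∀ i j, IsKInf (γ i j))
    (δ δInv : Fin N → (NNReal → NNReal))
    (hδ : ∀ i, IsKInf (δ i))
    (hδInv1 : ∀ i s, δInv i (δ i s) = s) (hδInv2 : ∀ i s, δ i (δInv i s) = s)
    -- max_j δ_i⁻¹ ∘ γ_ij ∘ δ_j (s) < s for all s > 0 and all i:
    (hsg : ∀ (i j : Fin N) (s : NNReal), 0 < s → δInv i (γ i j (δ j s)) < s) :
    -- the cyclic small-gain condition holds for every non-constant cycle: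
    ∀ (r : ℕ) (hr2 : 2 ≤ r) (hrN : r ≤ N) (idx : Fin r → Fin N),
      (¬ ∀ k : Fin r, idx k = idx ⟨0, by omega⟩) →
      ∀ s : NNReal, 0 < s →
        ((List.ofFn (fun k : Fin r => γ (idx k) (idx (k + ⟨1, by omega⟩)))).foldr
          (fun g acc => g ∘ acc) id) s < s := by
  have hδmono : ∀ i, StrictMono (δ i) := fun i => (hδ i).2.1
  have hδInvmono : ∀ i, StrictMono (δInv i) := by
    intro i a b hab
    by_contra h
    push_neg at h
    have := (hδmono i).monotone h
    rw [hδInv2, hδInv2] at this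
    exact absurd this (not_le.2 hab)
  have key : ∀ m, 1 ≤ m → ∀ (j : Fin (m+1) → Fin N) (s : NNReal), 0 < s →
      δInv (j 0) (((List.ofFn (fun k : Fin m => γ (j k.castSucc) (j k.succ))).foldr
        (fun g acc => g ∘ acc) id) (δ (j (Fin.last m)) s)) < s := by
    intro m
    induction m with
    | zero => omega
    | succ n ih =>
      intro _ j s hs
      rcases Nat.eq_zero_or_pos n with hn | hn
      · subst hn
        simpa using hsg (j 0) (j 1) s hs
      · have ih' := ih hn (fun k => j k.succ) s hs
        simp only [Fin.succ_castSucc] at ih'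
        rw [List.ofFn_succ]
        simp only [List.foldr_cons, Function.comp, Fin.castSucc_zero, Fin.succ_zero_eq_one,
          Fin.succ_last] at ih' ⊢
        set X := (List.ofFn fun k : Fin n => γ (j k.succ.castSucc) (j k.succ.succ)).foldr
          (fun g acc => g ∘ acc) id (δ (j (Fin.last (n+1))) s) with hX
        have hXlt : X < δ (j 1) s := by
          have := hδmono (j 1) ih'
          rwa [hδInv2] at this
        have h1 : γ (j 0) (j 1) X < γ (j 0) (j 1) (δ (j 1) s) := (hγ _ _).2.1 hXlt
        calc δInv (j 0) (γ (j 0) (j 1) X)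
            < δInv (j 0) (γ (j 0) (j 1) (δ (j 1) s)) := hδInvmono _ h1
          _ < s := hsg _ _ s hs
  intro r hr2 hrN idx _ s hs
  have hrpos : 0 < r := by omega
  set j : Fin (r+1) → Fin N := fun k => idx ⟨k.val % r, Nat.mod_lt _ hrpos⟩ with hj
  have hlist : (fun k : Fin r => γ (idx k) (idx (k + ⟨1, by omega⟩)))
      = fun k : Fin r => γ (j k.castSucc) (j k.succ) := by
    funext k
    have h1 : j k.castSucc = idx k := by
      simp only [hj]
      congr 1
      exact Fin.ext (Nat.mod_eq_of_lt k.isLt)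
    have h2 : j k.succ = idx (k + ⟨1, by omega⟩) := by
      apply congrArg idx
      exact Fin.ext (by simp [Fin.add_def])
    rw [h1, h2]
  have hj0 : j 0 = idx ⟨0, by omega⟩ := by
    apply congrArg idx
    exact Fin.ext (by simp)
  have hjlast : j (Fin.last r) = j 0 := by
    apply congrArg idx
    exact Fin.ext (by simp [Nat.mod_self])
  have hu : 0 < δInv (j 0) s := by
    rcases eq_or_lt_of_le (bot_le : (0:NNReal) ≤ δInv (j 0) s) with h | h
    · exfalso
      have h0 := congrArg (δ (j 0)) h.symm
      rw [hδInv2, show (⊥:NNReal) = 0 from rfl, (hδ (j 0)).2.2.1] at h0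
      exact absurd h0 (ne_of_gt hs)
    · exact h
  have hkey := key r (by omega) j (δInv (j 0) s) hu
  rw [hjlast, hδInv2] at hkey
  rw [hlist]
  have := hδmono (j 0) hkey
  rwa [hδInv2, hδInv2] at this
end

section
/- Let κ be a class K∞ function and suppose nonnegative reals V, V_d, w, e satisfy V_d − V ≤ −κ(V) + w + e. Let κ̂, ψ, λ, χ be class K∞ functions with κ̂ ≤ κ, id − κ̂ ∈ K∞, id − ψ ∈ K∞, and χ − id ∈ K∞. Then V_d ≤ max( (id − (id − ψ)∘κ̂)(V), (id + λ)∘κ̂⁻¹∘ψ⁻¹∘χ(w), (id + λ⁻¹)∘κ̂⁻¹∘ψ⁻¹∘χ∘(χ − id)⁻¹(e) ). -/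
theorem stmt8
    (κ κh ψ lam χ : NNReal → NNReal)
    (hκ : IsKInf κ) (hκh : IsKInf κh) (hψ : IsKInf ψ) (hlam : IsKInf lam) (hχ : IsKInf χ)
    (hκhκ : ∀ s, κh s ≤ κ s)
    -- id − κ̂ ∈ K∞ :
    (hκhle : ∀ s, κh s ≤ s) (hidκh : IsKInf (fun s => s - κh s))
    -- id − ψ ∈ K∞ :
    (hψle : ∀ s, ψ s ≤ s) (hidψ : IsKInf (fun s => s - ψ s))
    -- χ − id ∈ K∞ :
    (hχge : ∀ s, s ≤ χ s) (hχid : IsKInf (fun s => χ s - s))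
    -- inverses:
    (κhInv ψInv lamInv χdInv : NNReal → NNReal)
    (hκhInv : ∀ s, κhInv (κh s) = s ∧ κh (κhInv s) = s)
    (hψInv : ∀ s, ψInv (ψ s) = s ∧ ψ (ψInv s) = s)
    (hlamInv : ∀ s, lamInv (lam s) = s ∧ lam (lamInv s) = s)
    (hχdInv : ∀ s, χdInv (χ s - s) = s ∧ χ (χdInv s) - χdInv s = s)
    -- the additive decay inequality V_d − V ≤ −κ(V) + w + e :
    (V Vd w e : NNReal) (hdec : Vd + κ V ≤ V + w + e) :
    Vd ≤ max (V - (κh V - ψ (κh V)))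
          (max (κhInv (ψInv (χ w)) + lam (κhInv (ψInv (χ w))))
               (κhInv (ψInv (χ (χdInv e))) + lamInv (κhInv (ψInv (χ (χdInv e)))))) := by
  obtain ⟨-, hκhmono, -, -⟩ := hκh
  obtain ⟨-, hψmono, -, -⟩ := hψ
  obtain ⟨-, hχidmono, -, -⟩ := hχid
  obtain ⟨-, hidκhmono, -, -⟩ := hidκh
  have hψInvMono : Monotone ψInv := fun a b hab => by
    rw [← hψmono.le_iff_le, (hψInv a).2, (hψInv b).2]; exact hab
  have hκhInvMono : Monotone κhInv := fun a b hab => by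
    rw [← hκhmono.le_iff_le, (hκhInv a).2, (hκhInv b).2]; exact hab
  have hψInv_ge : ∀ s, s ≤ ψInv s := fun s => by
    conv_lhs => rw [← (hψInv s).2]
    exact hψle _
  have hdec' : Vd + κh V ≤ V + (w + e) := by
    calc Vd + κh V ≤ Vd + κ V := add_le_add_right (hκhκ V) Vd
      _ ≤ V + w + e := hdec
      _ = V + (w + e) := add_assoc _ _ _
  by_cases h1 : w + e ≤ ψ (κh V)
  · -- first branch
    refine le_max_of_le_left ?_
    rw [le_tsub_iff_right ((tsub_le_self).trans (hκhle V))]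
    rw [← add_le_add_iff_right (ψ (κh V)), add_assoc,
      tsub_add_cancel_of_le (hψle (κh V))]
    exact hdec'.trans (add_le_add_right h1 V)
  · push_neg at h1
    set r := w + e with hr
    have hrψ : r ≤ ψInv r := by
      conv_lhs => rw [← (hψInv r).2]
      exact hψle _
    have hVu : V ≤ κhInv (ψInv r) := by
      have : κh V ≤ ψInv r := by
        have := hψInvMono h1.le
        rwa [(hψInv (κh V)).1] at this
      have := hκhInvMono this
      rwa [(hκhInv V).1] at this
    set u := κhInv (ψInv r) with hu
    have hκhu : κh u = ψInv r := (hκhInv _).2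
    have hrκhu : r ≤ κh u := hκhu ▸ hrψ
    have hVdu : Vd ≤ u := by
      have h2 : Vd ≤ (V - κh V) + r := by
        rw [tsub_add_eq_add_tsub (hκhle V)]
        exact le_tsub_of_add_le_right hdec'
      calc Vd ≤ (V - κh V) + r := h2
        _ ≤ (u - κh u) + r := add_le_add_left (hidκhmono.monotone hVu) r
        _ ≤ (u - r) + r := add_le_add_left (tsub_le_tsub_left hrκhu u) r
        _ = u := tsub_add_cancel_of_le (hrκhu.trans (hκhle u))
    by_cases h2 : r ≤ χ w
    · refine le_max_of_le_right (le_max_of_le_left ?_)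
      exact (hVdu.trans (hκhInvMono (hψInvMono h2))).trans le_self_add
    · push_neg at h2
      have hw : w ≤ χdInv e := by
        have h3 : χ w - w ≤ e := by
          rw [tsub_le_iff_right]
          rw [hr, add_comm] at h2
          exact h2.le
        rw [← hχidmono.le_iff_le]
        simpa [(hχdInv e).2] using h3
      have hre : r ≤ χ (χdInv e) := by
        calc r = w + e := hr
          _ ≤ χdInv e + e := add_le_add_left hw e
          _ = χdInv e + (χ (χdInv e) - χdInv e) := by rw [(hχdInv e).2]
          _ = χ (χdInv e) := add_tsub_cancel_of_le (hχge _)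
      refine le_max_of_le_right (le_max_of_le_right ?_)
      exact (hVdu.trans (hκhInvMono (hψInvMono hre))).trans le_self_add
end

section
/- Suppose σ₁, σ₂ are class K∞ functions with σ_i(s) < s for all s > 0, and γ₁₂, γ₂₁ are class K∞ functions such that γ₁₂ ∘ γ₂₁ (s) < s for all s > 0. Then there exist class K∞ functions δ₁, δ₂ such that δ₁⁻¹∘σ₁∘δ₁(s) < s, δ₂⁻¹∘σ₂∘δ₂(s) < s, δ₁⁻¹∘γ₁₂∘δ₂(s) < s, and δ₂⁻¹∘γ₂₁∘δ₁(s) < s for all s > 0. -/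
/-!
Take `δ₁ = id`. The cycle condition says `γ₂₁ < γ₁₂⁻¹` on positive reals, so any class K∞
function `δ₂` squeezed strictly between them works, e.g. the average `(γ₂₁ + γ₁₂⁻¹) / 2`.
The diagonal conditions are preserved by any conjugation, since `δ⁻¹ ∘ σ ∘ δ < id` iff `σ < id`.
-/

open Filter Function

theorem StrictMono.invFun_lt_iff {α β : Type*} [Nonempty α] [LinearOrder α] [Preorder β]
    {f : α → β} (hf : StrictMono f) (hsurj : Surjective f) {y : β} {s : α} :
    invFun f y < s ↔ y < f s := by
  conv_rhs => rw [← rightInverse_invFun hsurj y]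
  exact hf.lt_iff_lt.symm

theorem isKInf_id : IsKInf id :=
  ⟨continuous_id, strictMono_id, rfl, tendsto_id⟩

namespace IsKInf

variable {f g : NNReal → NNReal}

theorem pos (hf : IsKInf f) {s : NNReal} (hs : 0 < s) : 0 < f s :=
  hf.2.2.1 ▸ hf.2.1 hs

theorem surjective (hf : IsKInf f) : Surjective f := by
  obtain ⟨hcont, -, hzero, htop⟩ := hf
  intro y
  obtain ⟨b, hb⟩ := (tendsto_atTop.1 htop y).exists
  obtain ⟨x, -, hx⟩ := intermediate_value_Icc (zero_le : 0 ≤ b) hcont.continuousOn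
    ⟨hzero.trans_le zero_le, hb⟩
  exact ⟨x, hx⟩

theorem invFun_lt_iff (hf : IsKInf f) {y s : NNReal} : invFun f y < s ↔ y < f s :=
  hf.2.1.invFun_lt_iff hf.surjective

noncomputable def orderIso (hf : IsKInf f) : NNReal ≃o NNReal :=
  hf.2.1.orderIsoOfSurjective f hf.surjective

theorem apply_orderIso_symm (hf : IsKInf f) (y : NNReal) : f (hf.orderIso.symm y) = y :=
  hf.orderIso.apply_symm_apply y

theorem symm (hf : IsKInf f) : IsKInf hf.orderIso.symm := by
  refine ⟨hf.orderIso.symm.continuous, hf.orderIso.symm.strictMono, ?_, ?_⟩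
  · rw [← hf.2.1.injective.eq_iff, hf.apply_orderIso_symm, hf.2.2.1]
  · exact hf.orderIso.symm.tendsto_atTop

theorem add_div_two (hf : IsKInf f) (hg : IsKInf g) : IsKInf fun s => (f s + g s) / 2 := by
  refine ⟨(hf.1.add hg.1).div_const 2, fun a b hab => ?_, by simp [hf.2.2.1, hg.2.2.1], ?_⟩
  · exact div_lt_div_of_pos_right (add_lt_add (hf.2.1 hab) (hg.2.1 hab)) two_pos
  · refine tendsto_atTop_mono (fun s => ?_) (hf.2.2.2.atTop_div_const two_pos)
    gcongr
    exact le_self_add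

end IsKInf

theorem stmt12_general
    (σ1 σ2 γ12 γ21 : NNReal → NNReal)
    (hγ12 : IsKInf γ12) (hγ21 : IsKInf γ21)
    (hσ1lt : ∀ s : NNReal, 0 < s → σ1 s < s)
    (hσ2lt : ∀ s : NNReal, 0 < s → σ2 s < s)
    (hcycle : ∀ s : NNReal, 0 < s → γ12 (γ21 s) < s) :
    ∃ δ1 δ2 : NNReal → NNReal, IsKInf δ1 ∧ IsKInf δ2 ∧
      ∀ s : NNReal, 0 < s →
        Function.invFun δ1 (σ1 (δ1 s)) < s ∧
        Function.invFun δ2 (σ2 (δ2 s)) < s ∧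
        Function.invFun δ1 (γ12 (δ2 s)) < s ∧
        Function.invFun δ2 (γ21 (δ1 s)) < s := by
  set γ12inv := hγ12.orderIso.symm
  have hbelow_inv : ∀ s, 0 < s → γ21 s < γ12inv s := fun s hs => by
    rw [← hγ12.2.1.lt_iff_lt, hγ12.apply_orderIso_symm]
    exact hcycle s hs
  have hδ2 := hγ21.add_div_two hγ12.symm
  refine ⟨id, fun s => (γ21 s + γ12inv s) / 2, isKInf_id, hδ2, fun s hs => ⟨?_, ?_, ?_, ?_⟩⟩
  · exact isKInf_id.invFun_lt_iff.2 (hσ1lt s hs)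
  · exact hδ2.invFun_lt_iff.2 (hσ2lt _ (hδ2.pos hs))
  · refine isKInf_id.invFun_lt_iff.2 ?_
    calc γ12 ((γ21 s + γ12inv s) / 2) < γ12 (γ12inv s) :=
          hγ12.2.1 (add_div_two_lt_right.2 (hbelow_inv s hs))
      _ = s := hγ12.apply_orderIso_symm s
  · exact hδ2.invFun_lt_iff.2 (left_lt_add_div_two.2 (hbelow_inv s hs))

theorem stmt12
    (σ1 σ2 γ12 γ21 : NNReal → NNReal)
    (hσ1 : IsKInf σ1) (hσ2 : IsKInf σ2) (hγ12 : IsKInf γ12) (hγ21 : IsKInf γ21)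
    (hσ1lt : ∀ s : NNReal, 0 < s → σ1 s < s)
    (hσ2lt : ∀ s : NNReal, 0 < s → σ2 s < s)
    (hcycle : ∀ s : NNReal, 0 < s → γ12 (γ21 s) < s) :
    ∃ δ1 δ2 : NNReal → NNReal, IsKInf δ1 ∧ IsKInf δ2 ∧
      ∀ s : NNReal, 0 < s →
        Function.invFun δ1 (σ1 (δ1 s)) < s ∧
        Function.invFun δ2 (σ2 (δ2 s)) < s ∧
        Function.invFun δ1 (γ12 (δ2 s)) < s ∧
        Function.invFun δ2 (γ21 (δ1 s)) < s :=
  stmt12_general σ1 σ2 γ12 γ21 hγ12 hγ21 hσ1lt hσ2lt hcycle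
end

section
/- Let V: X × X̂ → ℝ≥0 be an alternating simulation function from a non-blocking finite system Σ̂ to Σ (both without internal inputs), with associated functions α̃, σ̃ ∈ K∞ (σ̃ < id), ρ̃_ext ∈ K∞ ∪ {0}, ε̃ ≥ 0, and suppose all inputs of Σ̂ satisfy ‖û‖ ≤ v. Then for any initial pair (x₀, x̂₀) and any sequence of abstract inputs û(k), there exist input and state sequences of Σ and Σ̂ such that for all k, V(x(k), x̂(k)) ≤ max(σ̃^k(V(x₀, x̂₀)), ρ̃_ext(v), ε̃), and consequently limsup_k ‖h(x(k)) − ĥ(x̂(k))‖ ≤ α̃⁻¹(max(ρ̃_ext(v), ε̃)). -/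
/-!
Play the alternating simulation game step by step: for the current pair and the given abstract
input, choose the concrete input promised by the simulation function, let `Σ` move anywhere
(it is non-blocking), and answer with the matching move of `Σ̂`. Along the resulting pair of
trajectories `V` decreases by `σ̃` up to the offset `c = max (ρ̃_ext v) ε̃`, which `σ̃` cannot
exceed since `σ̃ < id`; this gives `V(k) ≤ max (σ̃^k V(0)) c`. The iterates `σ̃^k V(0)` are
antitone and their limit is a fixed point of `σ̃`, hence `0`, so `α̃⁻¹` of the bound tends to
`α̃⁻¹ c`.
-/

open Filter

open Topology

theorem exists_trajectories_of_forall_exists_forall_exists {X U Xh Uh : Type*}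
    (f : X → U → Set X) (fh : Xh → Uh → Set Xh) (hf : ∀ x u, (f x u).Nonempty)
    (R : X → Xh → Uh → X → Xh → Prop)
    (hR : ∀ x xh uh, ∃ u, ∀ xd ∈ f x u, ∃ xhd ∈ fh xh uh, R x xh uh xd xhd)
    (x0 : X) (xh0 : Xh) (uh : ℕ → Uh) :
    ∃ (u : ℕ → U) (x : ℕ → X) (xh : ℕ → Xh), x 0 = x0 ∧ xh 0 = xh0 ∧
      ∀ k, x (k + 1) ∈ f (x k) (u k) ∧ xh (k + 1) ∈ fh (xh k) (uh k) ∧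
        R (x k) (xh k) (uh k) (x (k + 1)) (xh (k + 1)) := by
  choose u' hu' using hR
  have hnext : ∀ (k : ℕ) (p : X × Xh), ∃ q : X × Xh, q.1 ∈ f p.1 (u' p.1 p.2 (uh k)) ∧
      q.2 ∈ fh p.2 (uh k) ∧ R p.1 p.2 (uh k) q.1 q.2 := by
    intro k p
    obtain ⟨xd, hxd⟩ := hf p.1 (u' p.1 p.2 (uh k))
    obtain ⟨xhd, hxhd, hR⟩ := hu' p.1 p.2 (uh k) xd hxd
    exact ⟨(xd, xhd), hxd, hxhd, hR⟩
  choose next hnext using hnext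
  let p : ℕ → X × Xh := fun k => Nat.rec (x0, xh0) next k
  exact ⟨fun k => u' (p k).1 (p k).2 (uh k), fun k => (p k).1, fun k => (p k).2, rfl, rfl,
    fun k => hnext k (p k)⟩

theorem le_max_iterate_of_le_max {α : Type*} [LinearOrder α] {σ : α → α} {c : α}
    (hσ : Monotone σ) (hc : σ c ≤ c) {w : ℕ → α} (hw : ∀ k, w (k + 1) ≤ max (σ (w k)) c)
    (k : ℕ) : w k ≤ max (σ^[k] (w 0)) c := by
  induction k with
  | zero => exact le_max_left _ _
  | succ k ih =>
    calc w (k + 1) ≤ max (σ (max (σ^[k] (w 0)) c)) c := (hw k).trans (by gcongr; exact hσ ih)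
      _ = max (σ^[k + 1] (w 0)) c := by
        rw [hσ.map_max, max_assoc, max_eq_right hc, Function.iterate_succ_apply']

theorem tendsto_iterate_nhds_bot {α : Type*} [ConditionallyCompleteLinearOrderBot α]
    [TopologicalSpace α] [OrderTopology α] {σ : α → α} (hσ : Continuous σ) (hσ_bot : σ ⊥ = ⊥)
    (hσ_lt : ∀ t, ⊥ < t → σ t < t) (a : α) :
    Tendsto (fun k => σ^[k] a) atTop (𝓝 ⊥) := by
  have hσ_le : ∀ t, σ t ≤ t := fun t =>
    (eq_bot_or_bot_lt t).elim (fun ht => by rw [ht, hσ_bot]) fun ht => (hσ_lt t ht).le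
  have hanti : Antitone fun k => σ^[k] a :=
    antitone_nat_of_succ_le fun k => by rw [Function.iterate_succ_apply']; exact hσ_le _
  have hlim := tendsto_atTop_ciInf hanti (OrderBot.bddBelow _)
  have hfix := isFixedPt_of_tendsto_iterate hlim hσ.continuousAt
  obtain hbot | hpos := eq_bot_or_bot_lt (⨅ k, σ^[k] a)
  · rwa [hbot] at hlim
  · exact absurd hfix (hσ_lt _ hpos).ne

theorem limsup_le_of_le_of_tendsto {α : Type*} [ConditionallyCompleteLinearOrderBot α]
    [TopologicalSpace α] [OrderTopology α] {e b : ℕ → α} {L : α} (h : ∀ k, e k ≤ b k)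
    (hb : Tendsto b atTop (𝓝 L)) : limsup e atTop ≤ L :=
  (limsup_le_limsup (Eventually.of_forall h) (hv := hb.isBoundedUnder_le)).trans
    hb.limsup_eq.le

theorem stmt14_general
    {X U Xh Uh Y : Type*} [NormedAddCommGroup Y] [NormedAddCommGroup Uh]
    (f : X → U → Set X) (fh : Xh → Uh → Set Xh)
    (h : X → Y) (hh : Xh → Y)
    -- non-blocking systems:
    (hnbf : ∀ x u, (f x u).Nonempty)
    (V : X → Xh → NNReal)
    (αt σt ρext αtInv : NNReal → NNReal) (εt : NNReal)
    (hαt : IsKInf αt)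
    (hαtInv : ∀ s, αtInv (αt s) = s ∧ αt (αtInv s) = s)
    (hσt : IsKInf σt) (hσtlt : ∀ s : NNReal, 0 < s → σt s < s)
    (hρ : IsKInf ρext ∨ ρext = 0)
    -- V is an alternating simulation function from Σ̂ to Σ:
    (hV1 : ∀ (x : X) (xh : Xh), αt ‖h x - hh xh‖₊ ≤ V x xh)
    (hV2 : ∀ (x : X) (xh : Xh) (uh : Uh), ∃ u : U,
      ∀ xd ∈ f x u, ∃ xhd ∈ fh xh uh,
        V xd xhd ≤ max (σt (V x xh)) (max (ρext ‖uh‖₊) εt))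
    -- inputs of Σ̂ are bounded by v:
    (v : NNReal) (hbound : ∀ uh : Uh, ‖uh‖₊ ≤ v) :
    ∀ (x0 : X) (xh0 : Xh) (uh : ℕ → Uh),
      ∃ (u : ℕ → U) (x : ℕ → X) (xh : ℕ → Xh),
        x 0 = x0 ∧ xh 0 = xh0 ∧
        (∀ k : ℕ, x (k + 1) ∈ f (x k) (u k) ∧ xh (k + 1) ∈ fh (xh k) (uh k)) ∧
        (∀ k : ℕ, V (x k) (xh k) ≤ max (σt^[k] (V x0 xh0)) (max (ρext v) εt)) ∧
        limsup (fun k : ℕ => ‖h (x k) - hh (xh k)‖₊) atTop ≤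
          αtInv (max (ρext v) εt) := by
  intro x0 xh0 uh
  obtain ⟨u, x, xh, rfl, rfl, hstep⟩ :=
    exists_trajectories_of_forall_exists_forall_exists f fh hnbf _ hV2 x0 xh0 uh
  set c := max (ρext v) εt
  have hρ_mono : Monotone ρext := hρ.elim (·.2.1.monotone) fun h0 => h0 ▸ monotone_const
  have hσ_c : σt c ≤ c :=
    (eq_zero_or_pos c).elim (fun hc => by rw [hc, hσt.2.2.1]) fun hc => (hσtlt c hc).le
  have hV : ∀ k, V (x k) (xh k) ≤ max (σt^[k] (V (x 0) (xh 0))) c :=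
    le_max_iterate_of_le_max hσt.2.1.monotone hσ_c fun k =>
      (hstep k).2.2.trans (max_le_max_left _ (max_le_max_right _ (hρ_mono (hbound _))))
  let φ : NNReal ≃o NNReal := hαt.2.1.orderIsoOfRightInverse αt αtInv fun s => (hαtInv s).2
  have hbound_lim : Tendsto (fun k => φ.symm (max (σt^[k] (V (x 0) (xh 0))) c)) atTop
      (𝓝 (φ.symm c)) := by
    have := (tendsto_iterate_nhds_bot hσt.1 hσt.2.2.1 hσtlt (V (x 0) (xh 0))).max
      (tendsto_const_nhds (x := c))
    exact φ.symm.continuous.tendsto c |>.comp (by simpa using this)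
  refine ⟨u, x, xh, rfl, rfl, fun k => ⟨(hstep k).1, (hstep k).2.1⟩, hV,
    limsup_le_of_le_of_tendsto (fun k => ?_) hbound_lim⟩
  exact φ.le_symm_apply.mpr ((hV1 _ _).trans (hV k))

theorem stmt14
    {X U Xh Uh Y : Type*} [NormedAddCommGroup Y] [NormedAddCommGroup Uh]
    (f : X → U → Set X) (fh : Xh → Uh → Set Xh)
    (h : X → Y) (hh : Xh → Y)
    -- non-blocking systems:
    (hnbf : ∀ x u, (f x u).Nonempty) (hnbfh : ∀ xh uh, (fh xh uh).Nonempty)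
    (V : X → Xh → NNReal)
    (αt σt ρext αtInv : NNReal → NNReal) (εt : NNReal)
    (hαt : IsKInf αt)
    (hαtInv : ∀ s, αtInv (αt s) = s ∧ αt (αtInv s) = s)
    (hσt : IsKInf σt) (hσtlt : ∀ s : NNReal, 0 < s → σt s < s)
    (hρ : IsKInf ρext ∨ ρext = 0)
    -- V is an alternating simulation function from Σ̂ to Σ:
    (hV1 : ∀ (x : X) (xh : Xh), αt ‖h x - hh xh‖₊ ≤ V x xh)
    (hV2 : ∀ (x : X) (xh : Xh) (uh : Uh), ∃ u : U,
      ∀ xd ∈ f x u, ∃ xhd ∈ fh xh uh,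
        V xd xhd ≤ max (σt (V x xh)) (max (ρext ‖uh‖₊) εt))
    -- inputs of Σ̂ are bounded by v:
    (v : NNReal) (hbound : ∀ uh : Uh, ‖uh‖₊ ≤ v) :
    ∀ (x0 : X) (xh0 : Xh) (uh : ℕ → Uh),
      ∃ (u : ℕ → U) (x : ℕ → X) (xh : ℕ → Xh),
        x 0 = x0 ∧ xh 0 = xh0 ∧
        (∀ k : ℕ, x (k + 1) ∈ f (x k) (u k) ∧ xh (k + 1) ∈ fh (xh k) (uh k)) ∧
        (∀ k : ℕ, V (x k) (xh k) ≤ max (σt^[k] (V x0 xh0)) (max (ρext v) εt)) ∧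
        limsup (fun k : ℕ => ‖h (x k) - hh (xh k)‖₊) atTop ≤
          αtInv (max (ρext v) εt) :=
  stmt14_general f fh h hh hnbf V αt σt ρext αtInv εt hαt hαtInv hσt hσtlt hρ hV1 hV2 v hbound
end
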